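/- For any first-order formula θ and any FO(D)-formula ψ, define (ψ ↾ θ) := (¬θ) ∨ (θ ∧ ψ). Then M ⊨_X (ψ ↾ θ) if and only if M ⊨_Y ψ, where Y = {s ∈ X : M ⊨_s θ}. -/

import Mathlib

/-- Formulas of first-order logic with team semantics, in negation normal form,
over a relational signature `σ` (with arities `ar`) extended with dependency
atoms indexed by `δ` (with arities `dar`).  Equality and inequality literals
are between tuples of variables; variables are natural numbers. -/
inductive TForm (σ : Type) (ar : σ → ℕ) (δ : Type) (dar : δ → ℕ) : Type
  | rel (r : σ) (ts : Fin (ar r) → ℕ)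
  | nrel (r : σ) (ts : Fin (ar r) → ℕ)
  | eq (k : ℕ) (x y : Fin k → ℕ)
  | neq (k : ℕ) (x y : Fin k → ℕ)
  | dep (d : δ) (xs : Fin (dar d) → ℕ)
  | and (φ ψ : TForm σ ar δ dar)
  | or (φ ψ : TForm σ ar δ dar)
  | ex (v : ℕ) (φ : TForm σ ar δ dar)
  | all (v : ℕ) (φ : TForm σ ar δ dar)

/-- A team over a model with carrier `M`: a set of assignments. -/
abbrev Team (M : Type) := Set (ℕ → M)

/-- `X(x̄)`: the relation of values of the tuple `x̄` in the team `X`. -/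
def Team.rel {M : Type} (X : Team M) {k : ℕ} (xs : Fin k → ℕ) : Set (Fin k → M) :=
  {t | ∃ s ∈ X, t = fun i => s (xs i)}

/-- An interpretation of a family of dependencies: for each index, an
isomorphism-invariant-style class of pairs (carrier, relation). -/
abbrev DepFam (δ : Type) (dar : δ → ℕ) := ∀ d : δ, ∀ M : Type, Set (Fin (dar d) → M) → Prop

/-- Lax team semantics. -/
def tsat {σ : Type} {ar : σ → ℕ} {δ : Type} {dar : δ → ℕ} {M : Type}
    (RI : ∀ r : σ, Set (Fin (ar r) → M)) (DI : DepFam δ dar) :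
    TForm σ ar δ dar → Team M → Prop
  | .rel r ts, X => ∀ s ∈ X, (fun i => s (ts i)) ∈ RI r
  | .nrel r ts, X => ∀ s ∈ X, (fun i => s (ts i)) ∉ RI r
  | .eq _ x y, X => ∀ s ∈ X, (fun i => s (x i)) = fun i => s (y i)
  | .neq _ x y, X => ∀ s ∈ X, (fun i => s (x i)) ≠ fun i => s (y i)
  | .dep d xs, X => DI d M (X.rel xs)
  | .and φ ψ, X => tsat RI DI φ X ∧ tsat RI DI ψ X
  | .or φ ψ, X => ∃ Y Z, X = Y ∪ Z ∧ tsat RI DI φ Y ∧ tsat RI DI ψ Z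
  | .ex v φ, X => ∃ H : (ℕ → M) → Set M, (∀ s ∈ X, (H s).Nonempty) ∧
      tsat RI DI φ {s' | ∃ s ∈ X, ∃ m ∈ H s, s' = Function.update s v m}
  | .all v φ, X => tsat RI DI φ {s' | ∃ s ∈ X, ∃ m : M, s' = Function.update s v m}

/-- Tarski (single-assignment) semantics; dependency atoms are treated as
trivially true (they are only meaningful for first-order formulas). -/
def ssat {σ : Type} {ar : σ → ℕ} {δ : Type} {dar : δ → ℕ} {M : Type}
    (RI : ∀ r : σ, Set (Fin (ar r) → M)) :
    TForm σ ar δ dar → (ℕ → M) → Prop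
  | .rel r ts, s => (fun i => s (ts i)) ∈ RI r
  | .nrel r ts, s => (fun i => s (ts i)) ∉ RI r
  | .eq _ x y, s => (fun i => s (x i)) = fun i => s (y i)
  | .neq _ x y, s => (fun i => s (x i)) ≠ fun i => s (y i)
  | .dep _ _, _ => True
  | .and φ ψ, s => ssat RI φ s ∧ ssat RI ψ s
  | .or φ ψ, s => ssat RI φ s ∨ ssat RI ψ s
  | .ex v φ, s => ∃ m : M, ssat RI φ (Function.update s v m)
  | .all v φ, s => ∀ m : M, ssat RI φ (Function.update s v m)

/-- A formula is first-order if it contains no dependency atoms. -/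
def TForm.isFO {σ : Type} {ar : σ → ℕ} {δ : Type} {dar : δ → ℕ} :
    TForm σ ar δ dar → Prop
  | .dep _ _ => False
  | .and φ ψ => φ.isFO ∧ ψ.isFO
  | .or φ ψ => φ.isFO ∧ ψ.isFO
  | .ex _ φ => φ.isFO
  | .all _ φ => φ.isFO
  | _ => True

/-- Free variables of a formula. -/
def TForm.free {σ : Type} {ar : σ → ℕ} {δ : Type} {dar : δ → ℕ} :
    TForm σ ar δ dar → Set ℕ
  | .rel _ ts => Set.range ts
  | .nrel _ ts => Set.range ts
  | .eq _ x y => Set.range x ∪ Set.range y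
  | .neq _ x y => Set.range x ∪ Set.range y
  | .dep _ xs => Set.range xs
  | .and φ ψ => φ.free ∪ ψ.free
  | .or φ ψ => φ.free ∪ ψ.free
  | .ex v φ => φ.free \ {v}
  | .all v φ => φ.free \ {v}

/-- The flattening `φᶠ`: replace every dependency atom by the trivially true
atom `⊤` (here rendered as the empty-tuple equality). -/
def TForm.flatten {σ : Type} {ar : σ → ℕ} {δ : Type} {dar : δ → ℕ} :
    TForm σ ar δ dar → TForm σ ar δ dar
  | .dep _ _ => .eq 0 Fin.elim0 Fin.elim0
  | .and φ ψ => .and φ.flatten ψ.flatten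
  | .or φ ψ => .or φ.flatten ψ.flatten
  | .ex v φ => .ex v φ.flatten
  | .all v φ => .all v φ.flatten
  | φ => φ

/-- Negation normal form of the negation of a (first-order) formula. -/
def TForm.neg {σ : Type} {ar : σ → ℕ} {δ : Type} {dar : δ → ℕ} :
    TForm σ ar δ dar → TForm σ ar δ dar
  | .rel r ts => .nrel r ts
  | .nrel r ts => .rel r ts
  | .eq k x y => .neq k x y
  | .neq k x y => .eq k x y
  | .dep d xs => .dep d xs
  | .and φ ψ => .or φ.neg ψ.neg
  | .or φ ψ => .and φ.neg ψ.neg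
  | .ex v φ => .all v φ.neg
  | .all v φ => .ex v φ.neg

/-- `(ψ ↾ θ) := (¬θ) ∨ (θ ∧ ψ)`. -/
def TForm.restrict {σ : Type} {ar : σ → ℕ} {δ : Type} {dar : δ → ℕ}
    (ψ θ : TForm σ ar δ dar) : TForm σ ar δ dar :=
  .or θ.neg (.and θ ψ)

/-- A family of dependencies is upwards closed. -/
def UpClosed {δ : Type} {dar : δ → ℕ} (DI : DepFam δ dar) : Prop :=
  ∀ (d : δ) (M : Type) (R S : Set (Fin (dar d) → M)), R ⊆ S → DI d M R → DI d M S

/-- The constancy dependency of arity `n`. -/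
def ConstD (n : ℕ) : ∀ M : Type, Set (Fin n → M) → Prop :=
  fun _ R => ∀ t ∈ R, ∀ t' ∈ R, t = t'

/-! First-order formulas, and with them `¬θ`, are flat, so in a split `X = Y ∪ Z` witnessing
`¬θ ∨ (θ ∧ ψ)` every assignment of `Y` falsifies `θ` and every one of `Z` satisfies it; hence
`Z = {s ∈ X | s ⊨ θ}`. Conversely, `X` splits into the assignments falsifying and satisfying `θ`. -/

section

variable {σ : Type} {ar : σ → ℕ} {δ : Type} {dar : δ → ℕ} {M : Type}

theorem TForm.isFO.neg {θ : TForm σ ar δ dar} (hθ : θ.isFO) : θ.neg.isFO := by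
  induction θ with
  | dep => exact hθ.elim
  | and _ _ ihφ ihψ | or _ _ ihφ ihψ => exact ⟨ihφ hθ.1, ihψ hθ.2⟩
  | ex _ _ ih | all _ _ ih => exact ih hθ
  | _ => trivial

theorem ssat_neg_iff (RI : ∀ r : σ, Set (Fin (ar r) → M)) {θ : TForm σ ar δ dar}
    (hθ : θ.isFO) (s : ℕ → M) : ssat RI θ.neg s ↔ ¬ ssat RI θ s := by
  induction θ generalizing s with
  | dep => exact hθ.elim
  | and _ _ ihφ ihψ => simp only [TForm.neg, ssat, ihφ hθ.1, ihψ hθ.2, not_and_or]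
  | or _ _ ihφ ihψ => simp only [TForm.neg, ssat, ihφ hθ.1, ihψ hθ.2, not_or]
  | ex _ _ ih => simp only [TForm.neg, ssat, ih hθ, not_exists]
  | all _ _ ih => simp only [TForm.neg, ssat, ih hθ, not_forall]
  | _ => simp [TForm.neg, ssat]

theorem Set.sep_union_sep_not {α : Type*} (X : Set α) (p : α → Prop) :
    {x ∈ X | p x} ∪ {x ∈ X | ¬ p x} = X := by
  rw [← Set.sep_or, Set.sep_eq_self_iff_mem_true]
  exact fun x _ => em (p x)

theorem Set.sep_union_eq_right {α : Type*} {Y Z : Set α} {p : α → Prop} (hY : ∀ x ∈ Y, ¬ p x)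
    (hZ : ∀ x ∈ Z, p x) : {x ∈ Y ∪ Z | p x} = Z := by
  calc {x ∈ Y ∪ Z | p x} = {x ∈ Y | p x} ∪ {x ∈ Z | p x} := Set.sep_union
    _ = Z := by
      rw [Set.sep_eq_empty_iff_mem_false.2 hY, Set.sep_eq_self_iff_mem_true.2 hZ, Set.empty_union]

theorem tsat_iff_forall_ssat (RI : ∀ r : σ, Set (Fin (ar r) → M)) (DI : DepFam δ dar)
    {θ : TForm σ ar δ dar} (hθ : θ.isFO) (X : Team M) :
    tsat RI DI θ X ↔ ∀ s ∈ X, ssat RI θ s := by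
  induction θ generalizing X with
  | dep => exact hθ.elim
  | and _ _ ihφ ihψ =>
    simp only [tsat, ssat, ihφ hθ.1, ihψ hθ.2]
    exact forall₂_and.symm
  | @or φ ψ ihφ ihψ =>
    simp only [tsat, ssat, ihφ hθ.1, ihψ hθ.2]
    constructor
    · rintro ⟨Y, Z, rfl, hY, hZ⟩ s (hs | hs)
      exacts [.inl (hY s hs), .inr (hZ s hs)]
    · intro h
      refine ⟨{s ∈ X | ssat RI φ s}, {s ∈ X | ssat RI ψ s}, ?_, fun s hs => hs.2,
        fun s hs => hs.2⟩
      rw [← Set.sep_or, Set.sep_eq_self_iff_mem_true.2 h]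
  | @ex v φ ih =>
    simp only [tsat, ssat, ih hθ]
    constructor
    · rintro ⟨H, hne, hφ⟩ s hs
      obtain ⟨m, hm⟩ := hne s hs
      exact ⟨m, hφ _ ⟨s, hs, m, hm, rfl⟩⟩
    · intro h
      refine ⟨fun s => {m | ssat RI φ (Function.update s v m)}, h, ?_⟩
      rintro _ ⟨s, -, m, hm, rfl⟩
      exact hm
  | all _ _ ih =>
    simp only [tsat, ssat, ih hθ]
    exact ⟨fun h s hs m => h _ ⟨s, hs, m, rfl⟩, fun h _ ⟨s, hs, m, hs'⟩ => hs' ▸ h s hs m⟩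
  | _ => simp [tsat, ssat]

end

theorem restrict_sem {σ : Type} {ar : σ → ℕ} {δ : Type} {dar : δ → ℕ} {M : Type}
    (RI : ∀ r : σ, Set (Fin (ar r) → M)) (DI : DepFam δ dar)
    (ψ θ : TForm σ ar δ dar) (hθ : θ.isFO) (X : Team M) :
    tsat RI DI (ψ.restrict θ) X ↔ tsat RI DI ψ {s ∈ X | ssat RI θ s} := by
  simp only [TForm.restrict, tsat, tsat_iff_forall_ssat RI DI hθ,
    tsat_iff_forall_ssat RI DI hθ.neg, ssat_neg_iff RI hθ]
  constructor
  · rintro ⟨Y, Z, rfl, hY, hZ, hψ⟩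
    rwa [Set.sep_union_eq_right hY hZ]
  · intro hψ
    exact ⟨{s ∈ X | ¬ ssat RI θ s}, {s ∈ X | ssat RI θ s},
      by rw [Set.union_comm, Set.sep_union_sep_not], fun s hs => hs.2, fun s hs => hs.2, hψ⟩
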